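/- Let P be a full-support probability on 𝕊 and let V : 𝕊 → ℝ be monotone with V(s) > V(s^-) for every s ∈ 𝕊 (with V(empty list) = 0). Then the additive valuation ν*(s) := V(s) − V(s^-) is the unique maximizer of f over the set of positive valuations: ν* is positive, and for every ν : 𝕊 → (0, ∞) with ν ≠ ν* one has f(ν*) > f(ν). In particular, a positive valuation ν maximizes f if and only if ν is additive for V. -/

import Mathlib

open Finset

namespace CoreAttr

variable (A : Type) [Fintype A] [DecidableEq A]

def listsLe : ℕ → Finset (List A)
  | 0 => {[]}
  | n + 1 => {[]} ∪ (Finset.univ ×ˢ listsLe n).image fun p : A × List A => p.1 :: p.2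

theorem mem_listsLe (n : ℕ) (l : List A) : l ∈ listsLe A n ↔ l.length ≤ n := by
  induction n generalizing l with
  | zero => simp [listsLe, Nat.le_zero, List.length_eq_zero_iff]
  | succ n ih =>
    cases l with
    | nil => simp [listsLe]
    | cons a t => simp [listsLe, ih, Nat.succ_le_succ_iff]

/-- The set of scenarios: nonempty lists of actions of length at most `L`. -/
def scenarios (L : ℕ) : Finset (List A) := (listsLe A L).filter fun s => s ≠ []

theorem mem_scenarios (L : ℕ) (l : List A) :
    l ∈ scenarios A L ↔ l ≠ [] ∧ l.length ≤ L := by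
  simp [scenarios, mem_listsLe, and_comm]

variable {A}

/-- `P` is a probability on the finite set `𝕊`. -/
def IsProb (𝕊 : Finset (List A)) (P : List A → ℝ) : Prop :=
  (∀ s ∈ 𝕊, 0 ≤ P s) ∧ ∑ s ∈ 𝕊, P s = 1

def FullSupport (𝕊 : Finset (List A)) (P : List A → ℝ) : Prop :=
  ∀ s ∈ 𝕊, 0 < P s

/-- `μ` is an internal attribution for the reward `V`. -/
def IsInternalAttr (𝕊 : Finset (List A)) (V : List A → ℝ) (μ : ℕ → List A → ℝ) : Prop :=
  (∀ i : ℕ, ∀ s ∈ 𝕊, 0 ≤ μ i s) ∧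
  (∀ i : ℕ, ∀ s ∈ 𝕊, ¬(1 ≤ i ∧ i ≤ s.length) → μ i s = 0) ∧
  (∀ s ∈ 𝕊, ∑ i ∈ Finset.Icc 1 s.length, μ i s = V s)

/-- The valuation associated with attribution `μ` under probability `P`:
`ν_P^μ(s) = E_{S∼P}[μ(ℓ(s), S) | S ≽ s]`. -/
noncomputable def assocVal (𝕊 : Finset (List A)) (P : List A → ℝ) (μ : ℕ → List A → ℝ)
    (s : List A) : ℝ :=
  (∑ s' ∈ 𝕊.filter (fun s' => s <+: s'), P s' * μ s.length s') /
    (∑ s' ∈ 𝕊.filter (fun s' => s <+: s'), P s')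

/-- `Σ_{j=1}^{ℓ(s)} ν(s^j)`. -/
noncomputable def sumPrefix (ν : List A → ℝ) (s : List A) : ℝ :=
  ∑ j ∈ Finset.Icc 1 s.length, ν (s.take j)

/-- The fixed-point attribution `μ_ν`. -/
noncomputable def muFP (V ν : List A → ℝ) (i : ℕ) (s : List A) : ℝ :=
  if 1 ≤ i ∧ i ≤ s.length then ν (s.take i) * V s / sumPrefix ν s else 0

/-- The MM objective `f`. -/
noncomputable def fObj (𝕊 : Finset (List A)) (P V ν : List A → ℝ) : ℝ :=
  ∑ s ∈ 𝕊, P s * (V s * Real.log (sumPrefix ν s) - sumPrefix ν s)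

/-- The MM surrogate `g(ν | ν̂)`. -/
noncomputable def gSurr (𝕊 : Finset (List A)) (P V ν νh : List A → ℝ) : ℝ :=
  ∑ s ∈ 𝕊, P s * ∑ j ∈ Finset.Icc 1 s.length,
    (νh (s.take j) * V s / sumPrefix νh s *
        Real.log (ν (s.take j) / νh (s.take j) * sumPrefix νh s) -
      ν (s.take j))

section Aux

variable {L : ℕ}

lemma take_mem_scenarios {s : List A} (hs : s ∈ scenarios A L) {j : ℕ} (hj : 1 ≤ j) :
    s.take j ∈ scenarios A L := by
  rw [mem_scenarios] at hs ⊢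
  obtain ⟨hne, hlen⟩ := hs
  constructor
  · intro h
    have hl : 1 ≤ s.length := List.length_pos_iff.mpr hne
    have : (s.take j).length = min j s.length := List.length_take
    rw [h] at this
    simp at this
    omega
  · calc (s.take j).length ≤ s.length := by rw [List.length_take]; omega
      _ ≤ L := hlen

lemma dropLast_mem_scenarios {s : List A} (hs : s ∈ scenarios A L)
    (hne : s.dropLast ≠ []) : s.dropLast ∈ scenarios A L := by
  rw [mem_scenarios] at hs ⊢
  exact ⟨hne, by rw [List.length_dropLast]; omega⟩

lemma sumPrefix_nil (ν : List A → ℝ) : sumPrefix ν ([] : List A) = 0 := by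
  simp [sumPrefix]

lemma sumPrefix_eq_add (ν : List A → ℝ) {s : List A} (hs : s ≠ []) :
    sumPrefix ν s = sumPrefix ν s.dropLast + ν s := by
  have hl : 1 ≤ s.length := List.length_pos_iff.mpr hs
  obtain ⟨m, hm⟩ : ∃ m, s.length = m + 1 := ⟨s.length - 1, by omega⟩
  unfold sumPrefix
  rw [List.length_dropLast, hm]
  rw [Finset.sum_Icc_succ_top (by omega)]
  simp only [Nat.add_sub_cancel]
  congr 1
  · apply Finset.sum_congr rfl
    intro j hj
    have hj' : j ≤ m := (Finset.mem_Icc.mp hj).2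
    have hmin : min j (s.length - 1) = j := by rw [hm]; omega
    rw [List.dropLast_eq_take, List.take_take, hmin]
  · congr 1
    rw [← hm, List.take_length]

lemma V_pos {V : List A → ℝ} (hV0 : V [] = 0)
    (hstrict : ∀ s ∈ scenarios A L, V s.dropLast < V s) :
    ∀ s ∈ scenarios A L, 0 < V s := by
  have H : ∀ n : ℕ, ∀ s ∈ scenarios A L, s.length ≤ n → 0 < V s := by
    intro n
    induction n with
    | zero =>
      intro s hs hlen
      rw [mem_scenarios] at hs
      exact absurd (List.length_eq_zero_iff.mp (Nat.le_zero.mp hlen)) hs.1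
    | succ n ih =>
      intro s hs hlen
      have hst := hstrict s hs
      by_cases hd : s.dropLast = []
      · rw [hd, hV0] at hst; exact hst
      · have hds := dropLast_mem_scenarios hs hd
        have hlen' : s.dropLast.length ≤ n := by
          rw [List.length_dropLast]
          have : s ≠ [] := ((mem_scenarios A L s).mp hs).1
          have : 1 ≤ s.length := List.length_pos_iff.mpr this
          omega
        have := ih s.dropLast hds hlen'
        linarith
  intro s hs
  exact H s.length s hs le_rfl

lemma sumPrefix_additive {V : List A → ℝ} (hV0 : V [] = 0) :
    ∀ s ∈ scenarios A L, sumPrefix (fun s => V s - V s.dropLast) s = V s := by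
  have H : ∀ n : ℕ, ∀ s ∈ scenarios A L, s.length ≤ n →
      sumPrefix (fun s => V s - V s.dropLast) s = V s := by
    intro n
    induction n with
    | zero =>
      intro s hs hlen
      rw [mem_scenarios] at hs
      exact absurd (List.length_eq_zero_iff.mp (Nat.le_zero.mp hlen)) hs.1
    | succ n ih =>
      intro s hs hlen
      have hne : s ≠ [] := ((mem_scenarios A L s).mp hs).1
      rw [sumPrefix_eq_add _ hne]
      by_cases hd : s.dropLast = []
      · rw [hd, sumPrefix_nil]
        simp only [hd, hV0]
        ring
      · have hds := dropLast_mem_scenarios hs hd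
        have hlen' : s.dropLast.length ≤ n := by
          rw [List.length_dropLast]
          have : 1 ≤ s.length := List.length_pos_iff.mpr hne
          omega
        rw [ih s.dropLast hds hlen']
        ring
  intro s hs
  exact H s.length s hs le_rfl

lemma sumPrefix_pos {ν : List A → ℝ} (hν : ∀ s ∈ scenarios A L, 0 < ν s)
    {s : List A} (hs : s ∈ scenarios A L) : 0 < sumPrefix ν s := by
  have hne : s ≠ [] := ((mem_scenarios A L s).mp hs).1
  have hl : 1 ≤ s.length := List.length_pos_iff.mpr hne
  apply Finset.sum_pos
  · intro j hj
    exact hν _ (take_mem_scenarios hs (Finset.mem_Icc.mp hj).1)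
  · exact ⟨1, Finset.mem_Icc.mpr ⟨le_rfl, hl⟩⟩

lemma sumPrefix_congr {ν ν' : List A → ℝ}
    (h : ∀ s ∈ scenarios A L, ν s = ν' s) {s : List A} (hs : s ∈ scenarios A L) :
    sumPrefix ν s = sumPrefix ν' s := by
  apply Finset.sum_congr rfl
  intro j hj
  exact h _ (take_mem_scenarios hs (Finset.mem_Icc.mp hj).1)

lemma concave_le {a x : ℝ} (ha : 0 < a) (hx : 0 < x) :
    a * Real.log x - x ≤ a * Real.log a - a := by
  have h := Real.log_le_sub_one_of_pos (div_pos hx ha)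
  rw [Real.log_div hx.ne' ha.ne'] at h
  have h2 := mul_le_mul_of_nonneg_left h ha.le
  have hxa : a * (x / a - 1) = x - a := by field_simp
  nlinarith

lemma concave_lt {a x : ℝ} (ha : 0 < a) (hx : 0 < x) (hne : x ≠ a) :
    a * Real.log x - x < a * Real.log a - a := by
  have h1 : x / a ≠ 1 := by
    intro h
    apply hne
    field_simp at h
    exact h
  have h := Real.log_lt_sub_one_of_pos (div_pos hx ha) h1
  rw [Real.log_div hx.ne' ha.ne'] at h
  have h2 := mul_lt_mul_of_pos_left h ha
  have hxa : a * (x / a - 1) = x - a := by field_simp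
  nlinarith

/-- If `sumPrefix ν s = V s` on all scenarios, then `ν` is the additive valuation. -/
lemma additive_of_sumPrefix_eq {ν V : List A → ℝ} (hV0 : V [] = 0)
    (h : ∀ s ∈ scenarios A L, sumPrefix ν s = V s) :
    ∀ s ∈ scenarios A L, ν s = V s - V s.dropLast := by
  intro s hs
  have hne : s ≠ [] := ((mem_scenarios A L s).mp hs).1
  have hsplit := sumPrefix_eq_add ν hne
  rw [h s hs] at hsplit
  by_cases hd : s.dropLast = []
  · rw [hd, sumPrefix_nil] at hsplit
    rw [hd, hV0]
    linarith
  · rw [h s.dropLast (dropLast_mem_scenarios hs hd)] at hsplit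
    linarith

end Aux

/-- **The additive valuation is the unique maximizer of `f` over positive
valuations; a positive valuation maximizes `f` iff it is additive.** -/
theorem additive_unique_maximizer_of_fObj
    {A : Type} [Fintype A] [DecidableEq A] [Nonempty A] (L : ℕ) (hL : 1 ≤ L)
    (P : List A → ℝ) (hP : IsProb (scenarios A L) P)
    (hPfull : FullSupport (scenarios A L) P)
    (V : List A → ℝ) (hV0 : V [] = 0)
    (hmono : ∀ s ∈ scenarios A L, ∀ s' ∈ scenarios A L, s <+: s' → V s ≤ V s')
    (hstrict : ∀ s ∈ scenarios A L, V s.dropLast < V s) :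
    (∀ s ∈ scenarios A L, 0 < V s - V s.dropLast) ∧
    (∀ ν : List A → ℝ, (∀ s ∈ scenarios A L, 0 < ν s) →
      (∃ s ∈ scenarios A L, ν s ≠ V s - V s.dropLast) →
        fObj (scenarios A L) P V ν <
          fObj (scenarios A L) P V (fun s => V s - V s.dropLast)) ∧
    (∀ ν : List A → ℝ, (∀ s ∈ scenarios A L, 0 < ν s) →
      ((∀ ν' : List A → ℝ, (∀ s ∈ scenarios A L, 0 < ν' s) →
          fObj (scenarios A L) P V ν' ≤ fObj (scenarios A L) P V ν) ↔
        ∀ s ∈ scenarios A L, ν s = V s - V s.dropLast)) := by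
  set 𝕊 := scenarios A L with h𝕊
  set νstar : List A → ℝ := fun s => V s - V s.dropLast with hνstar
  have hVpos : ∀ s ∈ 𝕊, 0 < V s := V_pos hV0 hstrict
  have hpos : ∀ s ∈ 𝕊, 0 < νstar s := fun s hs => sub_pos.mpr (hstrict s hs)
  have hWstar : ∀ s ∈ 𝕊, sumPrefix νstar s = V s := sumPrefix_additive hV0
  -- the strict inequality (part 2)
  have key : ∀ ν : List A → ℝ, (∀ s ∈ 𝕊, 0 < ν s) →
      (∃ s ∈ 𝕊, ν s ≠ νstar s) →
      fObj 𝕊 P V ν < fObj 𝕊 P V νstar := by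
    intro ν hν hdiff
    -- there is a scenario where sumPrefix ν ≠ V
    have hex : ∃ s ∈ 𝕊, sumPrefix ν s ≠ V s := by
      by_contra h
      push_neg at h
      obtain ⟨s, hs, hne⟩ := hdiff
      exact hne (additive_of_sumPrefix_eq hV0 h s hs)
    obtain ⟨s₀, hs₀, hW₀⟩ := hex
    unfold fObj
    apply Finset.sum_lt_sum
    · intro s hs
      apply mul_le_mul_of_nonneg_left _ (hP.1 s hs)
      rw [hWstar s hs]
      exact concave_le (hVpos s hs) (sumPrefix_pos hν hs)
    · refine ⟨s₀, hs₀, ?_⟩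
      apply mul_lt_mul_of_pos_left _ (hPfull s₀ hs₀)
      rw [hWstar s₀ hs₀]
      exact concave_lt (hVpos s₀ hs₀) (sumPrefix_pos hν hs₀) hW₀
  refine ⟨hpos, key, ?_⟩
  intro ν hν
  constructor
  · -- maximizer → additive
    intro hmax
    by_contra h
    push_neg at h
    obtain ⟨s, hs, hne⟩ := h
    have h1 : fObj 𝕊 P V ν < fObj 𝕊 P V νstar := key ν hν ⟨s, hs, hne⟩
    have h2 : fObj 𝕊 P V νstar ≤ fObj 𝕊 P V ν := hmax νstar hpos
    linarith
  · -- additive → maximizer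
    intro hadd ν' hν'
    have hfeq : fObj 𝕊 P V ν = fObj 𝕊 P V νstar := by
      unfold fObj
      apply Finset.sum_congr rfl
      intro s hs
      rw [sumPrefix_congr hadd hs]
    by_cases hcase : ∀ s ∈ 𝕊, ν' s = νstar s
    · have : fObj 𝕊 P V ν' = fObj 𝕊 P V νstar := by
        unfold fObj
        apply Finset.sum_congr rfl
        intro s hs
        rw [sumPrefix_congr hcase hs]
      rw [this, hfeq]
    · push_neg at hcase
      rw [hfeq]
      exact (key ν' hν' hcase).le

end CoreAttr
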